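/- arXiv:1909.02715 — 2 statements merged into one kernel-verified Lean document; each statement's English description precedes it below -/
import Mathlib

section
/- The congruence subgroup Γ₁(2) = { [[a,b],[c,d]] ∈ SL₂(ℤ) : c ≡ 0 mod 2 and a ≡ d ≡ 1 mod 2 } is generated by the two matrices A = [[1,0],[-2,1]] and B = [[1,1],[0,1]]. -/
open Matrix

/-- The matrix `A = [[1,0],[-2,1]]` as an element of `SL(2, ℤ)`. -/
def A₂ : Matrix.SpecialLinearGroup (Fin 2) ℤ :=
  ⟨!![1, 0; -2, 1], by norm_num [Matrix.det_fin_two_of]⟩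

/-- The matrix `B = [[1,1],[0,1]]` as an element of `SL(2, ℤ)`. -/
def B₂ : Matrix.SpecialLinearGroup (Fin 2) ℤ :=
  ⟨!![1, 1; 0, 1], by norm_num [Matrix.det_fin_two_of]⟩

/-!
Left multiplication by `B^{±1}` and `A^{±1}` acts on the first column `(a, c)` by the row
operations `a ↦ a ± c` and `c ↦ c ∓ 2a`. For `g ∈ Γ₁(2)` the entry `a` is odd, hence nonzero, so
while `c ≠ 0` one of these moves decreases `|a| + |c|` without leaving `Γ₁(2)`. Once
`c = 0`, `g = ±B^b`, and `-1 = (BA)²`.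
-/

open scoped MatrixGroups
open Matrix.SpecialLinearGroup ModularGroup CongruenceSubgroup

lemma B₂_eq_T : B₂ = T := rfl

lemma coe_A₂ : (A₂ : Matrix (Fin 2) (Fin 2) ℤ) = !![1, 0; -2, 1] := rfl

lemma coe_A₂_inv : ((A₂⁻¹ : SL(2, ℤ)) : Matrix (Fin 2) (Fin 2) ℤ) = !![1, 0; 2, 1] := by
  simp [coe_inv, coe_A₂, Matrix.adjugate_fin_two]

lemma coe_T_mul (g : SL(2, ℤ)) :
    ↑(T * g) = !![g 0 0 + g 1 0, g 0 1 + g 1 1; g 1 0, g 1 1] := by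
  rw [coe_mul, coe_T]
  ext i j; fin_cases i <;> fin_cases j <;> simp [Matrix.mul_apply]

lemma coe_T_inv_mul (g : SL(2, ℤ)) :
    ↑(T⁻¹ * g) = !![g 0 0 - g 1 0, g 0 1 - g 1 1; g 1 0, g 1 1] := by
  rw [coe_mul, coe_T_inv]
  ext i j; fin_cases i <;> fin_cases j <;> simp [Matrix.mul_apply] <;> ring

lemma coe_A₂_mul (g : SL(2, ℤ)) :
    ↑(A₂ * g) = !![g 0 0, g 0 1; g 1 0 - 2 * g 0 0, g 1 1 - 2 * g 0 1] := by
  rw [coe_mul, coe_A₂]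
  ext i j; fin_cases i <;> fin_cases j <;> simp [Matrix.mul_apply] <;> ring

lemma coe_A₂_inv_mul (g : SL(2, ℤ)) :
    ↑(A₂⁻¹ * g) = !![g 0 0, g 0 1; g 1 0 + 2 * g 0 0, g 1 1 + 2 * g 0 1] := by
  rw [coe_mul, coe_A₂_inv]
  ext i j; fin_cases i <;> fin_cases j <;> simp [Matrix.mul_apply] <;> ring

lemma T_mul_A₂_sq : (T * A₂) ^ 2 = -1 := by
  ext i j; fin_cases i <;> fin_cases j <;> rfl

lemma eq_T_zpow_or_neg_of_c_eq_zero {g : SL(2, ℤ)} (hc : g 1 0 = 0) :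
    g = T ^ g 0 1 ∨ g = -T ^ (-g 0 1) := by
  have had : g 0 0 * g 1 1 = 1 := by
    have := g.det_coe
    rwa [Matrix.det_fin_two, hc, mul_zero, sub_zero] at this
  rcases Int.eq_one_or_neg_one_of_mul_eq_one' had with ⟨ha, hd⟩ | ⟨ha, hd⟩
  · left; ext i j; fin_cases i <;> fin_cases j <;> simp [ha, hc, hd, coe_T_zpow]
  · right; ext i j; fin_cases i <;> fin_cases j <;> simp [ha, hc, hd, coe_T_zpow]

lemma mem_Gamma1_two_iff (g : SL(2, ℤ)) :
    g ∈ Gamma1 2 ↔ Odd (g 0 0) ∧ Odd (g 1 1) ∧ Even (g 1 0) := by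
  simp only [Gamma1_mem, ZMod.intCast_eq_one_iff_odd, ZMod.intCast_eq_zero_iff_even]

lemma A₂_mem_Gamma1_two : A₂ ∈ Gamma1 2 := by
  rw [mem_Gamma1_two_iff]; simp [coe_A₂]

lemma B₂_mem_Gamma1_two : B₂ ∈ Gamma1 2 := by
  rw [mem_Gamma1_two_iff]; simp [B₂_eq_T]

lemma closure_A₂_B₂_le_Gamma1_two : Subgroup.closure {A₂, B₂} ≤ Gamma1 2 :=
  Subgroup.closure_le _ |>.2 <| by
    rintro _ (rfl | rfl)
    exacts [A₂_mem_Gamma1_two, B₂_mem_Gamma1_two]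

lemma A₂_mem_closure : A₂ ∈ Subgroup.closure {A₂, B₂} :=
  Subgroup.subset_closure (by simp)

lemma T_mem_closure : T ∈ Subgroup.closure {A₂, B₂} :=
  Subgroup.subset_closure (by simp [B₂_eq_T])

lemma neg_one_mem_closure : -1 ∈ Subgroup.closure {A₂, B₂} :=
  T_mul_A₂_sq ▸ pow_mem (mul_mem T_mem_closure A₂_mem_closure) 2

lemma Int.natAbs_descent {a c : ℤ} (ha : a ≠ 0) (hc : c ≠ 0) :
    (a + c).natAbs < a.natAbs ∨ (a - c).natAbs < a.natAbs ∨
      (c - 2 * a).natAbs < c.natAbs ∨ (c + 2 * a).natAbs < c.natAbs := by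
  omega

lemma exists_mem_closure_natAbs_lt {g : SL(2, ℤ)} (ha : g 0 0 ≠ 0) (hc : g 1 0 ≠ 0) :
    ∃ h ∈ Subgroup.closure {A₂, B₂},
      ((h * g) 0 0).natAbs + ((h * g) 1 0).natAbs < (g 0 0).natAbs + (g 1 0).natAbs := by
  rcases Int.natAbs_descent ha hc with hlt | hlt | hlt | hlt
  · exact ⟨T, T_mem_closure, by rw [coe_T_mul]; simpa using hlt⟩
  · exact ⟨T⁻¹, inv_mem T_mem_closure, by rw [coe_T_inv_mul]; simpa using hlt⟩
  · exact ⟨A₂, A₂_mem_closure, by rw [coe_A₂_mul]; simpa using hlt⟩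
  · exact ⟨A₂⁻¹, inv_mem A₂_mem_closure, by rw [coe_A₂_inv_mul]; simpa using hlt⟩

lemma Gamma1_two_le_closure_A₂_B₂ : Gamma1 2 ≤ Subgroup.closure {A₂, B₂} := by
  intro g hg
  induction hn : (g 0 0).natAbs + (g 1 0).natAbs using Nat.strong_induction_on
    generalizing g with
  | _ n ih =>
    by_cases hc : g 1 0 = 0
    · rcases eq_T_zpow_or_neg_of_c_eq_zero hc with hpos | hneg
      · exact hpos ▸ zpow_mem T_mem_closure _
      · rw [hneg, ← neg_one_mul]
        exact mul_mem neg_one_mem_closure (zpow_mem T_mem_closure _)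
    · have ha : g 0 0 ≠ 0 := fun h ↦ by simpa [h] using ((mem_Gamma1_two_iff g).1 hg).1
      obtain ⟨s, hs, hlt⟩ := exists_mem_closure_natAbs_lt ha hc
      have hsg := ih _ (hn ▸ hlt) (mul_mem (closure_A₂_B₂_le_Gamma1_two hs) hg) rfl
      simpa using mul_mem (inv_mem hs) hsg

/-- `Γ₁(2)` is generated by `A = [[1,0],[-2,1]]` and `B = [[1,1],[0,1]]`. -/
theorem gamma1_two_generated :
    Subgroup.closure ({A₂, B₂} : Set (Matrix.SpecialLinearGroup (Fin 2) ℤ)) =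
      CongruenceSubgroup.Gamma1 2 :=
  closure_A₂_B₂_le_Gamma1_two.antisymm Gamma1_two_le_closure_A₂_B₂
end

section
/- The linear map σ : ℂ² → ℂ², σ(x,y) = ((y-x)/2, (-3x-y)/2), has order 3 (σ³ = id, σ ≠ id, σ² ≠ id) and preserves the polynomial F(x,y) = x(y² - x²) + g_s(3x² + y²) - g_l - 2g_s³ for all parameters g_s, g_l ∈ ℂ, i.e. F(σ(x,y)) = F(x,y). -/
/-- The `σ_{G₂}` automorphism of the `(x,y)`-plane. -/
noncomputable def sigmaG2 : ℂ × ℂ → ℂ × ℂ :=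
  fun p => ((p.2 - p.1) / 2, (-3 * p.1 - p.2) / 2)

/-- The Hesse family equation of type `G₂`. -/
noncomputable def FG2 (gs gl x y : ℂ) : ℂ :=
  x * (y ^ 2 - x ^ 2) + gs * (3 * x ^ 2 + y ^ 2) - gl - 2 * gs ^ 3

/-- `σ_{G₂}` has order 3 and preserves `F_{G₂}` for all parameters. -/
theorem sigmaG2_order_three_and_preserves_FG2 :
    sigmaG2 ∘ sigmaG2 ∘ sigmaG2 = id ∧
    sigmaG2 ≠ id ∧
    sigmaG2 ∘ sigmaG2 ≠ id ∧
    ∀ gs gl x y : ℂ, FG2 gs gl (sigmaG2 (x, y)).1 (sigmaG2 (x, y)).2 = FG2 gs gl x y := by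
  refine ⟨?_, ?_, ?_, ?_⟩
  · funext p
    simp only [Function.comp, sigmaG2, id]
    ext <;> ring
  · intro h
    have := congrFun h (1, 0)
    simp [sigmaG2, Prod.ext_iff] at this
  · intro h
    have := congrFun h (1, 0)
    simp [Function.comp, sigmaG2, Prod.ext_iff] at this
    norm_num at this
  · intro gs gl x y
    simp only [sigmaG2, FG2]
    ring
end
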